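/- arXiv:2101.06527 — 2 statements merged into one kernel-verified Lean document; each statement's English description precedes it below -/
import Mathlib

section
/- Let A be a hyperring. The following are equivalent: (i) √(0) = {0} and the topological space spec(A), equipped with the topology generated by the sets {D(a) : a ∈ A}, is a Boolean space (compact, Hausdorff and totally disconnected); (ii) for every a ∈ A there exists b ∈ A such that a = a²b. -/
universe u v

/-- A multiring: a commutative monoid with a multivalued addition. -/
class Multiring (A : Type u) extends CommMonoid A, Zero A, Neg A where
  /-- the multivalued sum: `madd b c` is the set `b + c` -/
  madd : A → A → Set A
  madd_nonempty : ∀ a b : A, (madd a b).Nonempty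
  madd_rev_left : ∀ a b c : A, a ∈ madd b c → c ∈ madd (-b) a
  madd_rev_right : ∀ a b c : A, a ∈ madd b c → b ∈ madd a (-c)
  mem_madd_zero : ∀ a b : A, a ∈ madd b 0 ↔ a = b
  madd_assoc : ∀ a b c g x : A, g ∈ madd a b → x ∈ madd g c →
    ∃ h ∈ madd b c, x ∈ madd a h
  madd_comm : ∀ a b : A, madd a b = madd b a
  mul_zero' : ∀ a : A, a * 0 = 0
  madd_mul : ∀ a b c d : A, a ∈ madd b c → a * d ∈ madd (b * d) (c * d)

namespace Multiring

variable {A : Type u} [Multiring A]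

/-- the iterated multivalued sum `x₁ + ⋯ + xₙ = {x₁} + (x₂ + ⋯ + xₙ)` of a list -/
def listSum : List A → Set A
  | [] => {(0 : A)}
  | a :: l => {x : A | ∃ y ∈ listSum l, x ∈ madd a y}

/-- an ideal of a multiring: a nonempty subset with `I + I ⊆ I` and `A·I ⊆ I` -/
def IsIdeal (I : Set A) : Prop :=
  I.Nonempty ∧ (∀ a ∈ I, ∀ b ∈ I, madd a b ⊆ I) ∧ ∀ a : A, ∀ b ∈ I, a * b ∈ I

/-- a prime ideal: a proper ideal such that `a*b ∈ p → a ∈ p ∨ b ∈ p` -/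
def IsPrimeIdeal (I : Set A) : Prop :=
  IsIdeal I ∧ (1 : A) ∉ I ∧ ∀ a b : A, a * b ∈ I → a ∈ I ∨ b ∈ I

/-- a maximal ideal: a proper ideal maximal among proper ideals -/
def IsMaximalIdeal (I : Set A) : Prop :=
  IsIdeal I ∧ (1 : A) ∉ I ∧ ∀ J : Set A, IsIdeal J → (1 : A) ∉ J → I ⊆ J → J = I

/-- a multiplicative subset -/
def IsMultiplicative (S : Set A) : Prop :=
  (1 : A) ∈ S ∧ ∀ s ∈ S, ∀ t ∈ S, s * t ∈ S

/-- a hyperring: a multiring with the strong distributivity property -/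
def IsHyperring (A : Type u) [Multiring A] : Prop :=
  ∀ x b c d : A, x ∈ madd (b * d) (c * d) → ∃ a ∈ madd b c, x = a * d

/-- a von Neumann (regular) hyperring -/
def IsVonNeumann (A : Type u) [Multiring A] : Prop :=
  IsHyperring A ∧ ∀ a : A, ∃ b : A, a = a * a * b

/-- the equivalence modulo an ideal `I`: `a ∼_I b` iff `(a + (-b)) ∩ I ≠ ∅`;
this is equality of classes in the quotient multiring `A/I`. -/
def simI (I : Set A) (a b : A) : Prop := ∃ x ∈ madd a (-b), x ∈ I

/-- membership of classes in the multivalued sum of the quotient `A/I`: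
`[a] ∈ [b] + [c]` iff `a ∈ b + c + i` for some `i ∈ I`. -/
def qmemI (I : Set A) (a b c : A) : Prop := ∃ i ∈ I, ∃ w ∈ madd c i, a ∈ madd b w

/-- representatives `x` with `[x] ∈ [c₁] + ⋯ + [cₙ]` in the quotient `A/I` -/
def qlistSumI (I : Set A) : List A → Set A
  | [] => {x : A | simI I x 0}
  | c :: l => {x : A | ∃ y ∈ qlistSumI I l, qmemI I x c y}

/-- the quotient multiring `A/I` is a multifield: `1 ≠ 0` and every nonzero
element is weak-invertible -/
def QuotIsMultifield (I : Set A) : Prop :=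
  ¬ simI I 1 0 ∧
    ∀ a : A, ¬ simI I a 0 →
      ∃ l : List A, l ≠ [] ∧ (1 : A) ∈ qlistSumI I (l.map fun b => a * b)

/-- the quotient multiring `A/I` is a hyperfield: `1 ≠ 0` and every nonzero
element is invertible -/
def QuotIsHyperfield (I : Set A) : Prop :=
  ¬ simI I 1 0 ∧ ∀ a : A, ¬ simI I a 0 → ∃ b : A, simI I (a * b) 1

/-- the Marshall equivalence associated to a multiplicative set `S`:
`a ∼_S b` iff `as = bt` for some `s,t ∈ S`; this is equality of classes in the
Marshall quotient `A/ₘS`. -/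
def simM (S : Set A) (a b : A) : Prop := ∃ s ∈ S, ∃ t ∈ S, a * s = b * t

/-- `S̄ = {x : xs ∈ S for some s ∈ S}` -/
def mbar (S : Set A) : Set A := {x : A | ∃ s ∈ S, x * s ∈ S}

/-- membership of classes in the multivalued sum of the Marshall quotient `A/ₘS`:
`[a] ∈ [b] + [c]` iff `as ∈ bt + cu` for some `s,t,u ∈ S`. -/
def qmemM (S : Set A) (a b c : A) : Prop :=
  ∃ s ∈ S, ∃ t ∈ S, ∃ u ∈ S, a * s ∈ madd (b * t) (c * u)

/-- representatives `x` with `[x] ∈ [c₁] + ⋯ + [cₙ]` in the Marshall quotient `A/ₘS` -/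
def qlistSumM (S : Set A) : List A → Set A
  | [] => {x : A | simM S x 0}
  | c :: l => {x : A | ∃ y ∈ qlistSumM S l, qmemM S x c y}

/-- the multivalued sum of the hyperfield `3 = {-1, 0, 1}` -/
def signAdd : SignType → SignType → Set SignType
  | SignType.zero, x => {x}
  | x, SignType.zero => {x}
  | SignType.pos, SignType.pos => {SignType.pos}
  | SignType.neg, SignType.neg => {SignType.neg}
  | _, _ => Set.univ

/-- a multiring morphism `A → 3`, i.e. an order of `A` -/
def IsSignMorphism (σ : A → SignType) : Prop :=
  (∀ a b c : A, a ∈ madd b c → σ a ∈ signAdd (σ b) (σ c)) ∧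
  (∀ a b : A, σ (a * b) = σ a * σ b) ∧
  (∀ a : A, σ (-a) = -(σ a)) ∧ σ 0 = 0 ∧ σ 1 = 1

/-- a prime cone of a multiring -/
def IsPrimeCone (P : Set A) : Prop :=
  (∀ a : A, a * a ∈ P) ∧ (∀ a ∈ P, ∀ b ∈ P, madd a b ⊆ P) ∧
  (∀ a ∈ P, ∀ b ∈ P, a * b ∈ P) ∧ (∀ a : A, a ∈ P ∨ -a ∈ P) ∧
  IsPrimeIdeal {x : A | x ∈ P ∧ -x ∈ P}

open Classical in
/-- the map `σ_P : A → 3` associated to a prime cone `P` -/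
noncomputable def sigmaOf (P : Set A) (a : A) : SignType :=
  if a ∈ P ∧ -a ∈ P then 0 else if a ∈ P then 1 else -1

/-- `ΣA²`: the set of elements lying in some finite sum of squares -/
def SumsOfSquares (A : Type u) [Multiring A] : Set A :=
  {x : A | ∃ l : List A, l ≠ [] ∧ x ∈ listSum (l.map fun a => a * a)}

/-- a multiring is semi-real when `-1 ∉ ΣA²` -/
def IsSemiReal (A : Type u) [Multiring A] : Prop := (-(1 : A)) ∉ SumsOfSquares A

/-- a real reduced multiring -/
def IsRealReduced (A : Type u) [Multiring A] : Prop :=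
  IsSemiReal A ∧ (∀ a : A, a * a * a = a) ∧
  (∀ a b : A, madd a (a * b * b) = {a}) ∧
  (∀ a b : A, ∃ c : A, madd (a * a) (b * b) = {c})

/-- a hyperfield: a hyperring with `1 ≠ 0` and all nonzero elements invertible -/
def IsHyperfield (A : Type u) [Multiring A] : Prop :=
  IsHyperring A ∧ (1 : A) ≠ 0 ∧ ∀ a : A, a ≠ 0 → ∃ b : A, a * b = 1

/-- a morphism of multirings -/
def IsMorphism {B : Type v} [Multiring B] (f : A → B) : Prop :=
  (∀ a b c : A, a ∈ madd b c → f a ∈ madd (f b) (f c)) ∧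
  (∀ a b : A, f (a * b) = f a * f b) ∧
  (∀ a : A, f (-a) = -(f a)) ∧ f 0 = 0 ∧ f 1 = 1

/-- the radical `√α = {x : xⁿ ∈ α for some n ≥ 1}` of an ideal -/
def radical (α : Set A) : Set A := {x : A | ∃ n : ℕ, 1 ≤ n ∧ x ^ n ∈ α}

/-- the ideal `(x) = ∪ {t₁x + ⋯ + tₙx}` generated by `x` -/
def genIdeal (x : A) : Set A :=
  {y : A | ∃ l : List A, l ≠ [] ∧ y ∈ listSum (l.map fun t => t * x)}

/-- `S_a = {x : aⁿ ∈ (x) for some n ≥ 0}` -/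
def Sgen (a : A) : Set A := {x : A | ∃ n : ℕ, a ^ n ∈ genIdeal x}

/-- `a` is weak-invertible when `1 ∈ ab₁ + ⋯ + abₙ` for some `b₁,…,bₙ` -/
def WeakInvertible (a : A) : Prop :=
  ∃ l : List A, l ≠ [] ∧ (1 : A) ∈ listSum (l.map fun b => a * b)

/-- the prime spectrum of a multiring -/
abbrev Spec (A : Type u) [Multiring A] : Type u := {p : Set A // IsPrimeIdeal p}

/-- the spectral topology on `spec A`, generated by the sets `D(a) = {p : a ∉ p}` -/
instance : TopologicalSpace (Spec A) :=
  TopologicalSpace.generateFrom {U : Set (Spec A) | ∃ a : A, U = {p : Spec A | a ∉ p.1}}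

/-- the Marshall quotient `A/ₘS` is a real reduced multiring (expressed on
representatives) -/
def QuotIsRealReduced (S : Set A) : Prop :=
  (∀ l : List A, l ≠ [] → (-(1 : A)) ∉ qlistSumM S (l.map fun a => a * a)) ∧
  (∀ a : A, simM S (a * a * a) a) ∧
  (∀ a b x : A, qmemM S x a (a * b * b) ↔ simM S x a) ∧
  (∀ a b : A, ∃ c : A, ∀ x : A, qmemM S x (a * a) (b * b) ↔ simM S x c)

/-- the Marshall quotient `A/ₘS` is a geometric von Neumann hyperring
(expressed on representatives): it is a hyperring, von Neumann regular, and
`e + eᶜ = {1}` for every idempotent `e` -/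
def QuotGeometricVN (S : Set A) : Prop :=
  (∀ x b c d : A, qmemM S x (b * d) (c * d) → ∃ a : A, qmemM S a b c ∧ simM S x (a * d)) ∧
  (∀ a : A, ∃ b : A, simM S a (a * a * b)) ∧
  (∀ e x : A, simM S (e * e) e → qmemM S x 1 (-e) → simM S (e * x) 0 →
    ∀ y : A, qmemM S y e x ↔ simM S y 1)

/-- a von Neumann subgroup: a multiplicative set such that for every idempotent
`a` (with complement `aᶜ`) and every `x ∈ D_S(a, aᶜ)` there is `s ∈ S` with `xs ∈ S` -/
def IsVNSubgroup (S : Set A) : Prop :=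
  IsMultiplicative S ∧
    ∀ a x ac : A, a * a = a → ac ∈ madd 1 (-a) → a * ac = 0 →
      (∃ u ∈ S, ∃ v ∈ S, ∃ w ∈ S, x * u ∈ madd (a * v) (ac * w)) →
      ∃ s ∈ S, x * s ∈ S

/-- a preorder of a multiring -/
def IsPreorderSet (T : Set A) : Prop :=
  (∀ a : A, a * a ∈ T) ∧ (∀ a ∈ T, ∀ b ∈ T, a * b ∈ T) ∧ (∀ a ∈ T, ∀ b ∈ T, madd a b ⊆ T)

/-- `1 + T = ∪ {1 + t : t ∈ T}` -/
def oneAdd (T : Set A) : Set A := {x : A | ∃ t ∈ T, x ∈ madd 1 t}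

/-- `ΣḞ²`: elements lying in some finite sum of squares of nonzero elements -/
def sumSqNonzero (A : Type u) [Multiring A] : Set A :=
  {x : A | ∃ l : List A, l ≠ [] ∧ (∀ a ∈ l, a ≠ 0) ∧ x ∈ listSum (l.map fun a => a * a)}

end Multiring

/-!
In a hyperring, an ideal missing every power of `a` extends to a prime missing `a` (Zorn; strong
distributivity is what makes `I + A·x` an ideal). So `D(a) ⊆ ⋃ D(c)` puts a power of `a` into the
ideal generated by finitely many of the `c`, and every `D(a)` is compact.

If `a = a²b`, then `e = ab` satisfies `ea = a`, and any `h ∈ 1 - e` has `ha = 0` and `1 ∈ e + h`;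
hence `D(h)` is the complement of `D(a)`, every `D(a)` is clopen and `spec(A)` is totally separated.
Conversely, in a compact Hausdorff spectrum the complement of the compact set `D(a)` is compact
open, hence `D(c₁) ∪ ⋯ ∪ D(cₙ)`. Reducedness forces `acᵢ = 0`, while `a, c₁, …, cₙ` generate the
unit ideal; multiplying a representation of `1` by `a` leaves only a multiple of `a²`.
-/

namespace Multiring

open Set TopologicalSpace

variable {A : Type u} [Multiring A]

-- scoped: a global instance would give `Mul A` a second, merely defeq, elaboration path
scoped instance : CommMonoidWithZero A where
  zero_mul x := by rw [mul_comm]; exact mul_zero' x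
  mul_zero := mul_zero'

theorem mem_madd_comm {a b c : A} (h : a ∈ madd b c) : a ∈ madd c b := by
  rwa [madd_comm]

theorem zero_mem_madd_neg_left (x : A) : (0 : A) ∈ madd (-x) x :=
  madd_rev_left x x 0 ((mem_madd_zero x x).2 rfl)

theorem eq_neg_of_zero_mem_madd {x y : A} (h : (0 : A) ∈ madd y x) : y = -x :=
  (mem_madd_zero y (-x)).1 (mem_madd_comm (madd_rev_right 0 y x h))

scoped instance : HasDistribNeg A where
  neg := Neg.neg
  neg_neg x := (eq_neg_of_zero_mem_madd (mem_madd_comm (zero_mem_madd_neg_left x))).symm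
  neg_mul x y := by
    have h := madd_mul 0 (-x) x y (zero_mem_madd_neg_left x)
    rw [zero_mul] at h
    exact eq_neg_of_zero_mem_madd h
  mul_neg x y := by
    have h := madd_mul 0 (-y) y x (zero_mem_madd_neg_left y)
    rw [zero_mul, mul_comm (-y), mul_comm y] at h
    exact eq_neg_of_zero_mem_madd h

section Ideals

variable {I : Set A}

theorem IsIdeal.mem_of_mem_madd (hI : IsIdeal I) {x a b : A} (ha : a ∈ I) (hb : b ∈ I)
    (hx : x ∈ madd a b) : x ∈ I :=
  hI.2.1 a ha b hb hx

theorem IsIdeal.mul_mem_left (hI : IsIdeal I) (a : A) {b : A} (hb : b ∈ I) : a * b ∈ I :=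
  hI.2.2 a b hb

theorem IsIdeal.mul_mem_right (hI : IsIdeal I) {a : A} (b : A) (ha : a ∈ I) : a * b ∈ I :=
  mul_comm b a ▸ hI.mul_mem_left b ha

theorem IsIdeal.zero_mem (hI : IsIdeal I) : (0 : A) ∈ I := by
  obtain ⟨i, hi⟩ := hI.1
  simpa using hI.mul_mem_left 0 hi

theorem isIdeal_zero : IsIdeal ({0} : Set A) := by
  refine ⟨singleton_nonempty 0, ?_, fun a b hb => ?_⟩
  · rintro a (rfl : a = 0) b (rfl : b = 0) z hz
    exact (mem_madd_zero z 0).1 hz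
  · rw [mem_singleton_iff.1 hb, mul_zero]; rfl

theorem isIdeal_colon (hI : IsIdeal I) (a : A) : IsIdeal {z | z * a ∈ I} :=
  ⟨⟨0, by simpa using hI.zero_mem⟩,
    fun _ hx _ hy _ hz => hI.mem_of_mem_madd hx hy (madd_mul _ _ _ a hz),
    fun t z hz => by simpa only [mem_ofPred_eq, mul_assoc] using hI.mul_mem_left t hz⟩

theorem isIdeal_principal (hA : IsHyperring A) (y : A) :
    IsIdeal {x | ∃ t : A, x = t * y} := by
  refine ⟨⟨y, 1, (one_mul y).symm⟩, ?_, fun a _ ⟨t, ht⟩ => ⟨a * t, by rw [ht, mul_assoc]⟩⟩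
  rintro _ ⟨t, rfl⟩ _ ⟨s, rfl⟩ z hz
  obtain ⟨u, -, rfl⟩ := hA z t s y hz
  exact ⟨u, rfl⟩

theorem isIdeal_sUnion_of_isChain {c : Set (Set A)} (hc : ∀ J ∈ c, IsIdeal J)
    (hchain : IsChain (· ⊆ ·) c) (hne : c.Nonempty) : IsIdeal (⋃₀ c) := by
  obtain ⟨J₀, hJ₀⟩ := hne
  refine ⟨⟨0, J₀, hJ₀, (hc J₀ hJ₀).zero_mem⟩, ?_, ?_⟩
  · rintro x ⟨J₁, hJ₁, hx⟩ y ⟨J₂, hJ₂, hy⟩ z hz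
    rcases hchain.total hJ₁ hJ₂ with h | h
    · exact ⟨J₂, hJ₂, (hc J₂ hJ₂).mem_of_mem_madd (h hx) hy hz⟩
    · exact ⟨J₁, hJ₁, (hc J₁ hJ₁).mem_of_mem_madd hx (h hy) hz⟩
  · rintro t x ⟨J, hJ, hx⟩
    exact ⟨J, hJ, (hc J hJ).mul_mem_left t hx⟩

/-- `I + A·x` -/
def adjoin (I : Set A) (x : A) : Set A := {z | ∃ t : A, ∃ i ∈ I, z ∈ madd (t * x) i}

theorem subset_adjoin (x : A) : I ⊆ adjoin I x :=
  fun z hz => ⟨0, z, hz, by simpa using mem_madd_comm ((mem_madd_zero z z).2 rfl)⟩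

theorem self_mem_adjoin (hI : IsIdeal I) (x : A) : x ∈ adjoin I x :=
  ⟨1, 0, hI.zero_mem, by simpa using (mem_madd_zero x x).2 rfl⟩

theorem isIdeal_adjoin (hA : IsHyperring A) (hI : IsIdeal I) (x : A) :
    IsIdeal (adjoin I x) := by
  refine ⟨⟨x, self_mem_adjoin hI x⟩, ?_, ?_⟩
  · rintro z ⟨t, i, hi, hz⟩ z' ⟨t', i', hi', hz'⟩ w hw
    obtain ⟨h₁, hh₁, hw₁⟩ := madd_assoc (t * x) i z' z w hz hw
    obtain ⟨h₂, hh₂, hh₁'⟩ := madd_assoc (t' * x) i' i z' h₁ hz' (mem_madd_comm hh₁)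
    obtain ⟨g, hg, hwg⟩ := madd_assoc _ _ _ _ _ (mem_madd_comm hh₁') (mem_madd_comm hw₁)
    -- strong distributivity collects `t x + t' x` into a single multiple of `x`
    obtain ⟨s, hs, rfl⟩ := hA g t t' x (mem_madd_comm hg)
    exact ⟨s, h₂, hI.mem_of_mem_madd hi' hi hh₂, mem_madd_comm hwg⟩
  · rintro a z ⟨t, i, hi, hz⟩
    refine ⟨t * a, i * a, hI.mul_mem_right a hi, ?_⟩
    simpa only [mul_comm a z, mul_right_comm t x a] using madd_mul z (t * x) i a hz

theorem IsIdeal.mul_mem_of_mem_adjoin (hI : IsIdeal I) {x y u v : A} (hxy : x * y ∈ I)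
    (hu : u ∈ adjoin I x) (hv : v ∈ adjoin I y) : u * v ∈ I := by
  obtain ⟨t, i, hi, hu⟩ := hu
  obtain ⟨s, j, hj, hv⟩ := hv
  have htxv : t * x * v ∈ I := by
    rw [mul_comm]
    refine hI.mem_of_mem_madd ?_ (hI.mul_mem_right _ hj) (madd_mul v (s * y) j (t * x) hv)
    rw [show s * y * (t * x) = s * t * (x * y) by ac_rfl]
    exact hI.mul_mem_left (s * t) hxy
  exact hI.mem_of_mem_madd htxv (hI.mul_mem_right v hi) (madd_mul u (t * x) i v hu)

def spanList : List A → Set A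
  | [] => {0}
  | x :: l => adjoin (spanList l) x

theorem isIdeal_spanList (hA : IsHyperring A) : ∀ l : List A, IsIdeal (spanList l)
  | [] => isIdeal_zero
  | x :: l => isIdeal_adjoin hA (isIdeal_spanList hA l) x

theorem mem_spanList_of_mem (hA : IsHyperring A) {x : A} :
    ∀ {l : List A}, x ∈ l → x ∈ spanList l
  | y :: l, h => by
    rcases List.mem_cons.1 h with rfl | h
    · exact self_mem_adjoin (isIdeal_spanList hA l) x
    · exact subset_adjoin y (mem_spanList_of_mem hA h)

theorem IsIdeal.spanList_subset (hI : IsIdeal I) : ∀ {l : List A}, (∀ x ∈ l, x ∈ I) →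
    spanList l ⊆ I
  | [], _ => by rintro z (rfl : z = 0); exact hI.zero_mem
  | x :: l, h => by
    rintro z ⟨t, i, hi, hz⟩
    exact hI.mem_of_mem_madd (hI.mul_mem_left t (h x List.mem_cons_self))
      (hI.spanList_subset (fun y hy => h y (List.mem_cons_of_mem x hy)) hi) hz

theorem spanList_mono (hA : IsHyperring A) {l l' : List A} (h : ∀ x ∈ l, x ∈ l') :
    spanList l ⊆ spanList l' :=
  (isIdeal_spanList hA l').spanList_subset fun x hx => mem_spanList_of_mem hA (h x hx)

end Ideals

section Primes

variable {p : Set A}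

theorem IsPrimeIdeal.isIdeal (hp : IsPrimeIdeal p) : IsIdeal p := hp.1

theorem IsPrimeIdeal.one_notMem (hp : IsPrimeIdeal p) : (1 : A) ∉ p := hp.2.1

theorem IsPrimeIdeal.mem_or_mem (hp : IsPrimeIdeal p) {a b : A} (h : a * b ∈ p) :
    a ∈ p ∨ b ∈ p :=
  hp.2.2 a b h

theorem IsPrimeIdeal.mem_of_pow_mem (hp : IsPrimeIdeal p) {a : A} :
    ∀ {n : ℕ}, a ^ n ∈ p → a ∈ p
  | 0, h => absurd (pow_zero a ▸ h) hp.one_notMem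
  | n + 1, h => (hp.mem_or_mem (pow_succ a n ▸ h)).elim hp.mem_of_pow_mem id

end Primes

theorem isPrimeIdeal_of_maximal (hA : IsHyperring A) {a : A} {m : Set A}
    (hm : Maximal (fun J => IsIdeal J ∧ ∀ n : ℕ, a ^ n ∉ J) m) : IsPrimeIdeal m := by
  obtain ⟨⟨hI, hpow⟩, hmax⟩ := hm
  have pow_mem_adjoin : ∀ w ∉ m, ∃ n : ℕ, a ^ n ∈ adjoin m w := by
    intro w hw
    by_contra! h
    exact hw (hmax ⟨isIdeal_adjoin hA hI w, h⟩ (subset_adjoin w) (self_mem_adjoin hI w))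
  refine ⟨hI, fun h1 => hpow 0 (by rwa [pow_zero]), fun x y hxy => ?_⟩
  by_contra! h
  obtain ⟨n, hn⟩ := pow_mem_adjoin x h.1
  obtain ⟨k, hk⟩ := pow_mem_adjoin y h.2
  exact hpow (n + k) (pow_add a n k ▸ IsIdeal.mul_mem_of_mem_adjoin hI hxy hn hk)

theorem exists_isPrimeIdeal_of_forall_pow_notMem (hA : IsHyperring A) {I : Set A}
    (hI : IsIdeal I) {a : A} (h : ∀ n : ℕ, a ^ n ∉ I) :
    ∃ p : Set A, IsPrimeIdeal p ∧ I ⊆ p ∧ a ∉ p := by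
  obtain ⟨m, hIm, hm⟩ := zorn_subset_nonempty {J : Set A | IsIdeal J ∧ ∀ n : ℕ, a ^ n ∉ J}
    (fun c hc hchain hne => ⟨⋃₀ c,
      ⟨isIdeal_sUnion_of_isChain (fun J hJ => (hc hJ).1) hchain hne,
        fun n ⟨J, hJ, hn⟩ => (hc hJ).2 n hn⟩,
      fun _ => subset_sUnion_of_mem⟩) I ⟨hI, h⟩
  exact ⟨m, isPrimeIdeal_of_maximal hA hm, hIm, fun ha => hm.1.2 1 (by rwa [pow_one])⟩

theorem exists_notMem_of_notMem_radical (hA : IsHyperring A) {a : A}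
    (ha : a ∉ radical ({0} : Set A)) : ∃ p : Spec A, a ∉ p.1 := by
  have hpow : ∀ n : ℕ, a ^ n ∉ ({0} : Set A)
    | 0, h => by
      have h10 : (1 : A) = 0 := by simpa using h
      exact ha ⟨1, le_rfl, by rw [pow_one, ← mul_one a, h10, mul_zero]; rfl⟩
    | n + 1, h => ha ⟨n + 1, n.succ_pos, h⟩
  obtain ⟨p, hp, -, hap⟩ := exists_isPrimeIdeal_of_forall_pow_notMem hA isIdeal_zero hpow
  exact ⟨⟨p, hp⟩, hap⟩

section Topology

/-- `D(a)` -/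
def basicOpen (a : A) : Set (Spec A) := {p | a ∉ p.1}

theorem basicOpen_mul (a b : A) : basicOpen (a * b) = basicOpen a ∩ basicOpen b := by
  ext p
  simp only [basicOpen, mem_ofPred_eq, mem_inter_iff, ← not_or]
  exact not_congr
    ⟨p.2.mem_or_mem, fun h => h.elim (p.2.isIdeal.mul_mem_right b) (p.2.isIdeal.mul_mem_left a)⟩

theorem basicOpen_one : basicOpen (1 : A) = univ :=
  eq_univ_of_forall fun p => p.2.one_notMem

theorem isTopologicalBasis_basicOpen : IsTopologicalBasis (range (basicOpen (A := A))) := by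
  refine ⟨?_, ?_, ?_⟩
  · rintro _ ⟨a, rfl⟩ _ ⟨b, rfl⟩ p hp
    exact ⟨basicOpen (a * b), mem_range_self _, basicOpen_mul a b ▸ hp, (basicOpen_mul a b).le⟩
  · exact sUnion_eq_univ_iff.2 fun p =>
      ⟨_, mem_range_self (1 : A), (basicOpen_one (A := A)).symm ▸ mem_univ p⟩
  · exact congrArg generateFrom (ext fun U => exists_congr fun a => eq_comm)

theorem isOpen_basicOpen (a : A) : IsOpen (basicOpen a) :=
  isTopologicalBasis_basicOpen.isOpen (mem_range_self a)

theorem basicOpen_subset_biUnion_of_pow_mem_spanList {a : A} {l : List A} {n : ℕ}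
    (h : a ^ n ∈ spanList l) : basicOpen a ⊆ ⋃ c ∈ l, basicOpen c := by
  intro p hp
  by_contra hnot
  simp only [basicOpen, mem_iUnion, mem_ofPred_eq, not_exists, not_not] at hnot
  exact hp (p.2.mem_of_pow_mem (p.2.isIdeal.spanList_subset hnot h))

theorem exists_pow_mem_spanList_of_basicOpen_subset (hA : IsHyperring A) {a : A} {G : Set A}
    (h : basicOpen a ⊆ ⋃ c ∈ G, basicOpen c) :
    ∃ l : List A, (∀ c ∈ l, c ∈ G) ∧ ∃ n : ℕ, a ^ n ∈ spanList l := by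
  set I : Set A := {z | ∃ l : List A, (∀ c ∈ l, c ∈ G) ∧ z ∈ spanList l}
  have hI : IsIdeal I := by
    refine ⟨⟨0, [], by simp, rfl⟩, ?_, ?_⟩
    · rintro x ⟨l₁, hl₁, hx⟩ y ⟨l₂, hl₂, hy⟩ z hz
      refine ⟨l₁ ++ l₂, fun c hc => (List.mem_append.1 hc).elim (hl₁ c) (hl₂ c), ?_⟩
      exact (isIdeal_spanList hA _).mem_of_mem_madd
        (spanList_mono hA (fun c => List.mem_append_left l₂) hx)
        (spanList_mono hA (fun c => List.mem_append_right l₁) hy) hz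
    · rintro t x ⟨l, hl, hx⟩
      exact ⟨l, hl, (isIdeal_spanList hA l).mul_mem_left t hx⟩
  by_contra! hnot
  obtain ⟨p, hp, hIp, hap⟩ := exists_isPrimeIdeal_of_forall_pow_notMem hA hI
    fun n ⟨l, hl, hn⟩ => hnot l hl n hn
  obtain ⟨c, hcG, hcp⟩ := mem_iUnion₂.1 (h (show (⟨p, hp⟩ : Spec A) ∈ basicOpen a from hap))
  exact hcp (hIp ⟨[c], by simpa using hcG, mem_spanList_of_mem hA List.mem_cons_self⟩)

theorem isCompact_basicOpen (hA : IsHyperring A) (a : A) : IsCompact (basicOpen a) := by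
  refine isCompact_generateFrom rfl fun P hP hcover => ?_
  have hcoverG : basicOpen a ⊆ ⋃ c ∈ {c | basicOpen c ∈ P}, basicOpen c := by
    intro p hp
    obtain ⟨U, hUP, hpU⟩ := hcover hp
    obtain ⟨c, rfl⟩ := hP hUP
    exact mem_biUnion (s := {c | basicOpen c ∈ P}) hUP hpU
  obtain ⟨l, hlP, n, hn⟩ := exists_pow_mem_spanList_of_basicOpen_subset hA hcoverG
  refine ⟨basicOpen '' {c | c ∈ l}, image_subset_iff.2 hlP, l.finite_toSet.image _, ?_⟩
  simpa [sUnion_image] using basicOpen_subset_biUnion_of_pow_mem_spanList hn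

theorem compactSpace_spec (hA : IsHyperring A) : CompactSpace (Spec A) :=
  ⟨basicOpen_one (A := A) ▸ isCompact_basicOpen hA 1⟩

end Topology

section VonNeumann

theorem eq_zero_of_pow_eq_zero_of_eq_mul_self_mul {a b : A} (hab : a = a * a * b) {n : ℕ}
    (hn : a ^ n = 0) (hn1 : 1 ≤ n) : a = 0 := by
  have key : ∀ k : ℕ, a = a ^ (k + 1) * b ^ k := by
    intro k
    induction k with
    | zero => simp
    | succ k ih =>
      calc a = a ^ (k + 1) * b ^ k * a * b := by rw [← ih]; exact hab
        _ = a ^ (k + 2) * b ^ (k + 1) := by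
          rw [pow_succ a (k + 1), pow_succ b k]; ac_rfl
  obtain ⟨k, rfl⟩ := Nat.exists_eq_add_of_le' hn1
  simpa [hn] using key k

theorem radical_zero_eq_of_vonNeumann (hvn : ∀ a : A, ∃ b : A, a = a * a * b) :
    radical ({0} : Set A) = {0} := by
  refine Subset.antisymm (fun a ⟨n, hn1, hn⟩ => ?_)
    fun a (ha : a = 0) => ⟨1, le_rfl, by simpa⟩
  obtain ⟨b, hab⟩ := hvn a
  exact eq_zero_of_pow_eq_zero_of_eq_mul_self_mul hab hn hn1

theorem exists_basicOpen_eq_compl (hA : IsHyperring A) {a b : A} (hab : a = a * a * b) :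
    ∃ h : A, basicOpen h = (basicOpen a)ᶜ := by
  set e := a * b
  have hea : e * a = a := by rw [mul_right_comm]; exact hab.symm
  have h0 : (0 : A) ∈ madd ((-e) * a) (1 * a) := by
    rw [one_mul, neg_mul, hea]; exact zero_mem_madd_neg_left a
  obtain ⟨h, hh, hha⟩ := hA 0 (-e) 1 a h0
  have h1 : (1 : A) ∈ madd e h := by simpa using madd_rev_left h (-e) 1 hh
  refine ⟨h, ext fun p => ?_⟩
  simp only [basicOpen, mem_compl_iff, mem_ofPred_eq, not_not]
  constructor
  · intro hhp
    exact (p.2.mem_or_mem (hha ▸ p.2.isIdeal.zero_mem)).resolve_left hhp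
  · intro hap hhp
    exact p.2.one_notMem (p.2.isIdeal.mem_of_mem_madd (p.2.isIdeal.mul_mem_right b hap) hhp h1)

theorem isClopen_basicOpen (hA : IsHyperring A) {a b : A} (hab : a = a * a * b) :
    IsClopen (basicOpen a) := by
  obtain ⟨h, hh⟩ := exists_basicOpen_eq_compl hA hab
  exact ⟨isOpen_compl_iff.1 (hh ▸ isOpen_basicOpen h), isOpen_basicOpen a⟩

theorem totallySeparatedSpace_spec (hA : IsHyperring A)
    (hvn : ∀ a : A, ∃ b : A, a = a * a * b) : TotallySeparatedSpace (Spec A) := by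
  refine totallySeparatedSpace_iff_exists_isClopen.2 fun p q hpq => ?_
  obtain ⟨a, ha⟩ : ∃ a : A, ¬(a ∈ p.1 ↔ a ∈ q.1) := by
    by_contra! h
    exact hpq (Subtype.ext (ext h))
  obtain ⟨b, hab⟩ := hvn a
  by_cases hap : a ∈ p.1
  · exact ⟨(basicOpen a)ᶜ, (isClopen_basicOpen hA hab).compl, not_not.2 hap,
      by simpa [basicOpen, hap] using ha⟩
  · exact ⟨basicOpen a, isClopen_basicOpen hA hab, hap, by simpa [basicOpen, hap] using ha⟩

theorem mul_eq_zero_of_basicOpen_subset_compl (hA : IsHyperring A)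
    (hrad : radical ({0} : Set A) = {0}) {a c : A} (h : basicOpen c ⊆ (basicOpen a)ᶜ) :
    a * c = 0 := by
  by_contra hac
  obtain ⟨p, hp⟩ := exists_notMem_of_notMem_radical hA (by rwa [hrad])
  have hp' : p ∈ basicOpen a ∩ basicOpen c := basicOpen_mul a c ▸ hp
  exact h hp'.2 hp'.1

theorem exists_eq_mul_self_mul_of_t2Space (hA : IsHyperring A)
    (hrad : radical ({0} : Set A) = {0}) [CompactSpace (Spec A)] [T2Space (Spec A)] (a : A) :
    ∃ b : A, a = a * a * b := by
  have hV : IsCompact (basicOpen a)ᶜ ∧ IsOpen (basicOpen a)ᶜ :=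
    ⟨(isOpen_basicOpen a).isClosed_compl.isCompact,
      (isCompact_basicOpen hA a).isClosed.isOpen_compl⟩
  obtain ⟨s, -, hs⟩ := (isCompact_open_iff_eq_finite_iUnion_of_isTopologicalBasis _
    isTopologicalBasis_basicOpen (isCompact_basicOpen hA) _).1 hV
  have hcover : basicOpen 1 ⊆ ⋃ c ∈ insert a s, basicOpen c := by
    intro p _
    by_cases hap : a ∈ p.1
    · exact biUnion_mono (subset_insert a s) (fun _ _ => le_rfl) (hs ▸ not_not.2 hap)
    · exact mem_biUnion (mem_insert a s) hap
  obtain ⟨l, hl, n, hn⟩ := exists_pow_mem_spanList_of_basicOpen_subset hA hcover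
  -- the colon ideal `(Aa² : a)` contains every generator, hence `1`
  have hcolon : spanList l ⊆ {z | z * a ∈ {x | ∃ t, x = t * (a * a)}} := by
    refine (isIdeal_colon (isIdeal_principal hA (a * a)) a).spanList_subset fun c hc => ?_
    rcases hl c hc with hca | hcs
    · exact ⟨1, by rw [hca, one_mul]⟩
    · refine ⟨0, ?_⟩
      rw [zero_mul, mul_comm]
      exact mul_eq_zero_of_basicOpen_subset_compl hA hrad (hs ▸ subset_biUnion_of_mem hcs)
  obtain ⟨t, ht⟩ := hcolon ((one_pow (M := A) n) ▸ hn)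
  exact ⟨t, (one_mul a).symm.trans (ht.trans (mul_comm t _))⟩

end VonNeumann

end Multiring

/-- A hyperring `A` satisfies `√0 = 0` with `spec(A)` a Boolean space iff every
`a ∈ A` can be written `a = a²b`. -/
theorem vonNeumann_characterization {A : Type u} [Multiring A]
    (hA : Multiring.IsHyperring A) :
    (Multiring.radical ({0} : Set A) = {0} ∧
      CompactSpace (Multiring.Spec A) ∧ T2Space (Multiring.Spec A) ∧
      TotallyDisconnectedSpace (Multiring.Spec A)) ↔
    (∀ a : A, ∃ b : A, a = a * a * b) := by
  refine ⟨fun ⟨hrad, _, _, _⟩ => Multiring.exists_eq_mul_self_mul_of_t2Space hA hrad,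
    fun hvn => ?_⟩
  have := Multiring.compactSpace_spec hA
  have := Multiring.totallySeparatedSpace_spec hA hvn
  exact ⟨Multiring.radical_zero_eq_of_vonNeumann hvn, inferInstance, inferInstance,
    inferInstance⟩
end

section
/- Let A be a von Neumann hyperring and e₁,…,eₙ idempotent elements with eᵢeⱼ = 0 for all i ≠ j and 1 ∈ e₁+⋯+eₙ. If eᵢ + eᵢᶜ = {1} for every i = 1,…,n, then e₁+⋯+eₙ = {1}. -/
universe u v

/-! Induction on the list. Write `x ∈ e + y` with `y` in the sum of the remaining idempotents.
Multiplying by `e` gives `x e = e`; multiplying by `eᶜ` kills `e` and fixes the remaining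
idempotents, so `x eᶜ` lies in their sum, which is a singleton by induction. Hence any two elements
`x, x'` of the sum satisfy `x e = x' e` and `x eᶜ = x' eᶜ`, and then
`x ∈ x' e + x' eᶜ = (e + eᶜ) x' = {x'}` by strong distributivity. -/

namespace Multiring

variable {A : Type u} [Multiring A]

lemma zero_mem_madd_neg_self (a : A) : (0 : A) ∈ madd (-a) a :=
  madd_rev_left a a 0 ((mem_madd_zero a a).2 rfl)

protected lemma neg_neg (a : A) : -(-a) = a :=
  ((mem_madd_zero a (-(-a))).1 (madd_rev_left 0 (-a) a (zero_mem_madd_neg_self a))).symm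

protected lemma zero_mul (a : A) : (0 : A) * a = 0 := by
  rw [mul_comm]
  exact mul_zero' a

protected lemma neg_mul (a b : A) : (-a) * b = -(a * b) := by
  have h := madd_mul 0 (-a) a b (zero_mem_madd_neg_self a)
  rw [Multiring.zero_mul] at h
  rw [(mem_madd_zero _ _).1 (madd_rev_left _ _ _ h), Multiring.neg_neg]

protected lemma neg_zero : (-(0 : A)) = 0 := by
  simpa only [mul_zero'] using (Multiring.neg_mul (1 : A) 0).symm

lemma mul_eq_self_of_mem_one_add_neg {c e q : A} (hc : c ∈ madd 1 (-e)) (hq : q * e = 0) :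
    q * c = q := by
  have h := madd_mul c 1 (-e) q hc
  rw [one_mul, Multiring.neg_mul, mul_comm e q, hq, Multiring.neg_zero] at h
  rw [mul_comm]
  exact (mem_madd_zero _ _).1 h

lemma madd_mul_eq_singleton (hA : IsHyperring A) {b c : A} (h : madd b c = {1}) (x : A) :
    madd (b * x) (c * x) = {x} := by
  refine Set.eq_singleton_iff_unique_mem.2 ⟨?_, fun y hy => ?_⟩
  · simpa only [one_mul] using madd_mul 1 b c x (h ▸ Set.mem_singleton 1)
  · obtain ⟨a, ha, rfl⟩ := hA y b c x hy
    rw [h] at ha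
    rw [ha, one_mul]

lemma eq_zero_of_mem_listSum {l : List A} (hl : ∀ a ∈ l, a = 0) {x : A}
    (hx : x ∈ listSum l) : x = 0 := by
  induction l generalizing x with
  | nil => exact hx
  | cons a l ih =>
    obtain ⟨y, hy, hxy⟩ := hx
    rw [hl a List.mem_cons_self, ih (fun b hb => hl b (List.mem_cons_of_mem _ hb)) hy] at hxy
    exact (mem_madd_zero x 0).1 hxy

lemma mul_mem_listSum_map (d : A) {l : List A} {x : A} (hx : x ∈ listSum l) :
    x * d ∈ listSum (l.map (· * d)) := by
  induction l generalizing x with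
  | nil =>
    rw [show x = 0 from hx, Multiring.zero_mul]
    rfl
  | cons a l ih =>
    obtain ⟨y, hy, hxy⟩ := hx
    exact ⟨y * d, ih hy, madd_mul x a y d hxy⟩

lemma mul_eq_zero_of_mem_listSum {l : List A} {d x : A} (hl : ∀ a ∈ l, a * d = 0)
    (hx : x ∈ listSum l) : x * d = 0 :=
  eq_zero_of_mem_listSum (List.forall_mem_map.2 hl) (mul_mem_listSum_map d hx)

lemma mul_mem_listSum {l : List A} {d x : A} (hl : ∀ a ∈ l, a * d = a)
    (hx : x ∈ listSum l) : x * d ∈ listSum l := by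
  simpa only [List.map_congr_left hl, List.map_id'] using mul_mem_listSum_map d hx

lemma listSum_subsingleton (hA : IsHyperring A) {l : List A}
    (hidem : ∀ e ∈ l, e * e = e)
    (hcompl : ∀ e ∈ l, ∃ c ∈ madd 1 (-e), e * c = 0 ∧ madd e c = {1})
    (horth : l.Pairwise fun a b => a * b = 0) :
    (listSum l).Subsingleton := by
  induction l with
  | nil => exact Set.subsingleton_singleton
  | cons e l ih =>
    obtain ⟨c, hc, hec, hec1⟩ := hcompl e List.mem_cons_self
    obtain ⟨horth_e, horth_l⟩ := List.pairwise_cons.1 horth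
    have ih := ih (fun a ha => hidem a (List.mem_cons_of_mem _ ha))
      (fun a ha => hcompl a (List.mem_cons_of_mem _ ha)) horth_l
    have hl_e : ∀ a ∈ l, a * e = 0 := fun a ha => (mul_comm a e).trans (horth_e a ha)
    have mul_e : ∀ x ∈ listSum (e :: l), x * e = e := by
      rintro x ⟨y, hy, hxy⟩
      have h := madd_mul x e y e hxy
      rwa [hidem e List.mem_cons_self, mul_eq_zero_of_mem_listSum hl_e hy,
        mem_madd_zero] at h
    have mul_c_mem : ∀ x ∈ listSum (e :: l), x * c ∈ listSum l := by
      rintro x ⟨y, hy, hxy⟩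
      have h := madd_mul x e y c hxy
      rw [hec, madd_comm, mem_madd_zero] at h
      exact h ▸ mul_mem_listSum (fun a ha => mul_eq_self_of_mem_one_add_neg hc (hl_e a ha)) hy
    intro x hx x' hx'
    have hx_mem : x ∈ madd (e * x) (c * x) := madd_mul_eq_singleton hA hec1 x ▸ Set.mem_singleton x
    rwa [mul_comm e, mul_comm c, mul_e x hx, ← mul_e x' hx',
      ih (mul_c_mem x hx) (mul_c_mem x' hx'), mul_comm x' e, mul_comm x' c,
      madd_mul_eq_singleton hA hec1] at hx_mem

end Multiring

/-- In a von Neumann hyperring, if `{e₁,…,eₙ}` is a partition of unity whose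
members satisfy `eᵢ + eᵢᶜ = {1}`, then `e₁ + ⋯ + eₙ = {1}`. -/
theorem partition_of_unity_sum_eq_one {A : Type u} [Multiring A]
    (hA : Multiring.IsVonNeumann A) (n : ℕ) (e c : Fin n → A)
    (hidem : ∀ i, e i * e i = e i)
    (horth : ∀ i j, i ≠ j → e i * e j = 0)
    (hc : ∀ i, c i ∈ Multiring.madd 1 (-(e i)) ∧ e i * c i = 0)
    (hunit : (1 : A) ∈ Multiring.listSum (List.ofFn e))
    (hcompl : ∀ i, Multiring.madd (e i) (c i) = {1}) :
    Multiring.listSum (List.ofFn e) = {1} := by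
  have hsub : (Multiring.listSum (List.ofFn e)).Subsingleton :=
    Multiring.listSum_subsingleton hA.1 (List.forall_mem_ofFn_iff.2 hidem)
      (List.forall_mem_ofFn_iff.2 fun i => ⟨c i, (hc i).1, (hc i).2, hcompl i⟩)
      (List.pairwise_ofFn.2 fun i j hij => horth i j hij.ne)
  exact hsub.eq_singleton_of_mem hunit
end
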